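/- Attitude Lyapunov decrease with cross-term cancellation: suppose δq, η : ℝ → ℝ³ satisfy δq' = −(1/2)|δq0|·K_{ω,p}·δq − (1/2)|δq0|·η0·K_{ω,i}·η − sign(δq0)·δq × (K_{ω,p}·δq + η0·K_{ω,i}·η) and η' = (1/2)·η0·|δq0|·K_{ω,i}·δq − (1/2)·|η0|·K_η·η + (terms of the form η × w for some w), where δq0, η0 : ℝ → ℝ are arbitrary measurable scalar functions and K_{ω,p}, K_{ω,i}, K_η are symmetric positive-definite matrices with K_{ω,p} ⪰ c₁·I and K_η ⪰ c₂·I (c₁, c₂ > 0). Then V = (1/2)(‖δq‖² + ‖η‖²) satisfies V' ≤ −(c₁/2)|δq0|·‖δq‖² − (c₂/2)|η0|·‖η‖² along solutions. -/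

import Mathlib

open Matrix

/-!
Differentiating `V` gives `δq ⬝ᵥ δq' + η ⬝ᵥ η'`. The gyroscopic terms drop out because
`v ⬝ᵥ (v × u) = 0`, and since `K_{ω,i}` is symmetric the two coupling terms
`∓ (1/2) |δq₀| η₀ δq ⬝ᵥ K_{ω,i} η` cancel exactly. What remains is
`-(1/2)|δq₀| δq ⬝ᵥ K_{ω,p} δq - (1/2)|η₀| η ⬝ᵥ K_η η`, which the lower bounds on
`K_{ω,p}` and `K_η` control.
-/

theorem HasDerivAt.dotProduct {𝕜 ι : Type*} [NontriviallyNormedField 𝕜] [Fintype ι]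
    {f g : 𝕜 → ι → 𝕜} {f' g' : ι → 𝕜} {t : 𝕜} (hf : HasDerivAt f f' t) (hg : HasDerivAt g g' t) :
    HasDerivAt (fun s => f s ⬝ᵥ g s) (f' ⬝ᵥ g t + f t ⬝ᵥ g') t := by
  have hfi := hasDerivAt_pi.mp hf
  have hgi := hasDerivAt_pi.mp hg
  have hsum := HasDerivAt.fun_sum (u := Finset.univ) fun i _ => (hfi i).fun_mul (hgi i)
  rw [Finset.sum_add_distrib] at hsum
  exact hsum

theorem HasDerivAt.half_dotProduct_self_add {ι : Type*} [Fintype ι] {f g : ℝ → ι → ℝ}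
    {f' g' : ι → ℝ} {t : ℝ} (hf : HasDerivAt f f' t) (hg : HasDerivAt g g' t) :
    HasDerivAt (fun s => 1 / 2 * (f s ⬝ᵥ f s + g s ⬝ᵥ g s)) (f t ⬝ᵥ f' + g t ⬝ᵥ g') t := by
  refine (((hf.dotProduct hf).add (hg.dotProduct hg)).const_mul (1 / 2)).congr_deriv ?_
  rw [dotProduct_comm f', dotProduct_comm g']
  ring

theorem Matrix.IsSymm.dotProduct_mulVec_comm {n R : Type*} [Fintype n] [CommSemiring R]
    {A : Matrix n n R} (hA : A.IsSymm) (v w : n → R) : v ⬝ᵥ A *ᵥ w = w ⬝ᵥ A *ᵥ v := by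
  rw [dotProduct_mulVec, ← mulVec_transpose, hA, dotProduct_comm]

theorem attitude_energy_rate_eq {Kωp Kωi Kη : Matrix (Fin 3) (Fin 3) ℝ} (hKωi : Kωi.IsSymm)
    (α β b s : ℝ) (x y w : Fin 3 → ℝ) :
    x ⬝ᵥ (-(1 / 2 * α) • (Kωp *ᵥ x) - (1 / 2 * α * b) • (Kωi *ᵥ y)
        - s • crossProduct x (Kωp *ᵥ x + b • (Kωi *ᵥ y)))
      + y ⬝ᵥ ((1 / 2 * b * α) • (Kωi *ᵥ x) - (1 / 2 * β) • (Kη *ᵥ y) + crossProduct y w)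
      = -(1 / 2) * α * (x ⬝ᵥ Kωp *ᵥ x) - (1 / 2) * β * (y ⬝ᵥ Kη *ᵥ y) := by
  simp only [dotProduct_add, dotProduct_sub, dotProduct_smul, dot_self_cross, smul_eq_mul,
    mul_zero, sub_zero, add_zero, hKωi.dotProduct_mulVec_comm y x]
  ring

theorem attitude_lyapunov_decrease_general
    (Kωp Kωi Kη : Matrix (Fin 3) (Fin 3) ℝ)
    (hKωi : Kωi.IsSymm ∧ Kωi.PosDef)
    (c₁ c₂ : ℝ)
    (hKωp_lb : ∀ v : Fin 3 → ℝ, c₁ * (v ⬝ᵥ v) ≤ v ⬝ᵥ Kωp *ᵥ v)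
    (hKη_lb : ∀ v : Fin 3 → ℝ, c₂ * (v ⬝ᵥ v) ≤ v ⬝ᵥ Kη *ᵥ v)
    (δq₀ η₀ : ℝ → ℝ)
    (w : ℝ → Fin 3 → ℝ)
    (δq η : ℝ → Fin 3 → ℝ)
    (hδq : ∀ t, HasDerivAt δq
      (-(1 / 2 * |δq₀ t|) • (Kωp *ᵥ δq t) - (1 / 2 * |δq₀ t| * η₀ t) • (Kωi *ᵥ η t)
        - Real.sign (δq₀ t) •
            (crossProduct (δq t) (Kωp *ᵥ δq t + η₀ t • (Kωi *ᵥ η t)))) t)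
    (hη : ∀ t, HasDerivAt η
      ((1 / 2 * η₀ t * |δq₀ t|) • (Kωi *ᵥ δq t) - (1 / 2 * |η₀ t|) • (Kη *ᵥ η t)
        + crossProduct (η t) (w t)) t)
    (V : ℝ → ℝ)
    (hV : ∀ t, V t = (1 / 2) * (δq t ⬝ᵥ δq t + η t ⬝ᵥ η t)) :
    ∀ t, deriv V t ≤
      -(c₁ / 2) * |δq₀ t| * (δq t ⬝ᵥ δq t) - (c₂ / 2) * |η₀ t| * (η t ⬝ᵥ η t) := by
  intro t
  obtain rfl : V = fun s => 1 / 2 * (δq s ⬝ᵥ δq s + η s ⬝ᵥ η s) := funext hV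
  rw [((hδq t).half_dotProduct_self_add (hη t)).deriv, attitude_energy_rate_eq hKωi.1]
  have hδq_bound := mul_le_mul_of_nonneg_left (hKωp_lb (δq t)) (abs_nonneg (δq₀ t))
  have hη_bound := mul_le_mul_of_nonneg_left (hKη_lb (η t)) (abs_nonneg (η₀ t))
  linarith

/-- Attitude Lyapunov decrease with cross-term cancellation: if
`δq' = −(1/2)|δq₀| K_{ω,p} δq − (1/2)|δq₀| η₀ K_{ω,i} η
      − sign(δq₀) δq × (K_{ω,p} δq + η₀ K_{ω,i} η)` and
`η' = (1/2) η₀ |δq₀| K_{ω,i} δq − (1/2)|η₀| K_η η + η × w`, with `δq₀, η₀`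
arbitrary measurable scalar functions and `K_{ω,p}, K_{ω,i}, K_η` symmetric
positive-definite matrices with `K_{ω,p} ⪰ c₁ I`, `K_η ⪰ c₂ I` (`c₁, c₂ > 0`),
then `V = (1/2)(‖δq‖² + ‖η‖²)` satisfies
`V' ≤ −(c₁/2)|δq₀|‖δq‖² − (c₂/2)|η₀|‖η‖²` along solutions. -/
theorem attitude_lyapunov_decrease
    (Kωp Kωi Kη : Matrix (Fin 3) (Fin 3) ℝ)
    (hKωp : Kωp.IsSymm ∧ Kωp.PosDef) (hKωi : Kωi.IsSymm ∧ Kωi.PosDef)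
    (hKη : Kη.IsSymm ∧ Kη.PosDef)
    (c₁ c₂ : ℝ) (hc₁ : 0 < c₁) (hc₂ : 0 < c₂)
    (hKωp_lb : ∀ v : Fin 3 → ℝ, c₁ * (v ⬝ᵥ v) ≤ v ⬝ᵥ Kωp *ᵥ v)
    (hKη_lb : ∀ v : Fin 3 → ℝ, c₂ * (v ⬝ᵥ v) ≤ v ⬝ᵥ Kη *ᵥ v)
    (δq₀ η₀ : ℝ → ℝ) (hδq₀ : Measurable δq₀) (hη₀ : Measurable η₀)
    (w : ℝ → Fin 3 → ℝ)
    (δq η : ℝ → Fin 3 → ℝ)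
    (hδq : ∀ t, HasDerivAt δq
      (-(1 / 2 * |δq₀ t|) • (Kωp *ᵥ δq t) - (1 / 2 * |δq₀ t| * η₀ t) • (Kωi *ᵥ η t)
        - Real.sign (δq₀ t) •
            (crossProduct (δq t) (Kωp *ᵥ δq t + η₀ t • (Kωi *ᵥ η t)))) t)
    (hη : ∀ t, HasDerivAt η
      ((1 / 2 * η₀ t * |δq₀ t|) • (Kωi *ᵥ δq t) - (1 / 2 * |η₀ t|) • (Kη *ᵥ η t)
        + crossProduct (η t) (w t)) t)
    (V : ℝ → ℝ)
    (hV : ∀ t, V t = (1 / 2) * (δq t ⬝ᵥ δq t + η t ⬝ᵥ η t)) :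
    ∀ t, deriv V t ≤
      -(c₁ / 2) * |δq₀ t| * (δq t ⬝ᵥ δq t) - (c₂ / 2) * |η₀ t| * (η t ⬝ᵥ η t) :=
  attitude_lyapunov_decrease_general Kωp Kωi Kη hKωi c₁ c₂ hKωp_lb hKη_lb δq₀ η₀ w δq η hδq hη V hV
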